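/- The recursive constrained reachability value equals the sum of path probabilities over goal-hitting safe paths: for every policy μ : ℕ → Q → A, horizon k ∈ ℕ, and state q ∈ Q, Pμ k q = [q ∈ G] + Σ_{n=1}^{k} Σ over finite sequences q₀, q₁, …, q_n with q₀ = q, q_t ∈ B \ G for all 0 ≤ t ≤ n−1, and q_n ∈ G, of Π_{t=0}^{n-1} P q_t (μ (k−t) q_t) q_{t+1}, where [q ∈ G] is 1 if q ∈ G and 0 otherwise. -/
import Mathlib

open Classical in
/-- Sum of path probabilities over goal-hitting safe paths of length `n`. -/
noncomputable def pSum {Q A : Type} [Fintype Q] (P : Q → A → Q → ℝ)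
    (G B : Set Q) (μ : ℕ → Q → A) (k n : ℕ) (q : Q) : ℝ :=
  ∑ ω ∈ Finset.univ.filter (fun ω : Fin (n + 1) → Q =>
      ω 0 = q ∧ (∀ t : Fin n, ω t.castSucc ∈ B ∧ ω t.castSucc ∉ G) ∧
        ω (Fin.last n) ∈ G),
    ∏ t : Fin n, P (ω t.castSucc) (μ (k - (t : ℕ)) (ω t.castSucc)) (ω t.succ)

section Aux

variable {Q A : Type} [Fintype Q] (P : Q → A → Q → ℝ) (G B : Set Q) (μ : ℕ → Q → A)

open Classical in
lemma pSum_zero (k : ℕ) (q : Q) :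
    pSum P G B μ k 0 q = if q ∈ G then 1 else 0 := by
  rw [pSum]
  split_ifs with h
  · rw [show (Finset.univ.filter (fun ω : Fin 1 → Q =>
        ω 0 = q ∧ (∀ t : Fin 0, ω t.castSucc ∈ B ∧ ω t.castSucc ∉ G) ∧
          ω (Fin.last 0) ∈ G)) = {fun _ : Fin 1 => q} from ?_]
    · simp
    · ext ω
      simp only [Finset.mem_filter, Finset.mem_univ, true_and, Finset.mem_singleton]
      constructor
      · rintro ⟨h0, -, -⟩
        funext t
        rw [Subsingleton.elim t 0, h0]
      · rintro rfl
        exact ⟨rfl, fun t => t.elim0, h⟩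
  · apply Finset.sum_eq_zero
    rintro ω hω
    rw [Finset.mem_filter] at hω
    obtain ⟨-, h0, -, hlast⟩ := hω
    exact absurd (h0 ▸ hlast) h

lemma pSum_goal {q : Q} (hq : q ∈ G) {n : ℕ} (hn : 1 ≤ n) (k : ℕ) :
    pSum P G B μ k n q = 0 := by
  classical
  rw [pSum]
  apply Finset.sum_eq_zero
  rintro ω hω
  rw [Finset.mem_filter] at hω
  obtain ⟨-, h0, hmid, -⟩ := hω
  have h00 : ((⟨0, hn⟩ : Fin n).castSucc : Fin (n + 1)) = 0 := by
    ext; simp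
  exact absurd (h00 ▸ (h0 ▸ hq : ω 0 ∈ G)) (hmid ⟨0, hn⟩).2

lemma pSum_unsafe {q : Q} (hq : q ∉ B) {n : ℕ} (hn : 1 ≤ n) (k : ℕ) :
    pSum P G B μ k n q = 0 := by
  classical
  rw [pSum]
  apply Finset.sum_eq_zero
  rintro ω hω
  rw [Finset.mem_filter] at hω
  obtain ⟨-, h0, hmid, -⟩ := hω
  have h00 : ((⟨0, hn⟩ : Fin n).castSucc : Fin (n + 1)) = 0 := by
    ext; simp
  exact absurd (h00 ▸ (hmid ⟨0, hn⟩).1) (h0 ▸ hq)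

lemma pSum_succ {q : Q} (hB : q ∈ B) (hG : q ∉ G) (k n : ℕ) :
    pSum P G B μ (k + 1) (n + 1) q
      = ∑ q', P q (μ (k + 1) q) q' * pSum P G B μ k n q' := by
  classical
  set a := μ (k + 1) q with ha
  -- RHS as a single sum over tails
  have hrhs : ∑ q', P q a q' * pSum P G B μ k n q'
      = ∑ ω' ∈ Finset.univ.filter (fun ω' : Fin (n + 1) → Q =>
            (∀ t : Fin n, ω' t.castSucc ∈ B ∧ ω' t.castSucc ∉ G) ∧
              ω' (Fin.last n) ∈ G),
          P q a (ω' 0) *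
            ∏ t : Fin n, P (ω' t.castSucc) (μ (k - (t : ℕ)) (ω' t.castSucc)) (ω' t.succ) := by
    rw [← Finset.sum_fiberwise (Finset.univ.filter (fun ω' : Fin (n + 1) → Q =>
        (∀ t : Fin n, ω' t.castSucc ∈ B ∧ ω' t.castSucc ∉ G) ∧ ω' (Fin.last n) ∈ G))
        (fun ω' => ω' 0)]
    refine Finset.sum_congr rfl fun q' _ => ?_
    rw [pSum, Finset.mul_sum]
    have hset : (Finset.univ.filter (fun ω' : Fin (n + 1) → Q =>
          ω' 0 = q' ∧ (∀ t : Fin n, ω' t.castSucc ∈ B ∧ ω' t.castSucc ∉ G) ∧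
            ω' (Fin.last n) ∈ G))
        = (Finset.univ.filter (fun ω' : Fin (n + 1) → Q =>
            (∀ t : Fin n, ω' t.castSucc ∈ B ∧ ω' t.castSucc ∉ G) ∧
              ω' (Fin.last n) ∈ G)).filter (fun ω' => ω' 0 = q') := by
      ext ω'
      simp only [Finset.mem_filter, Finset.mem_univ, true_and]
      tauto
    rw [hset]
    refine Finset.sum_congr rfl fun ω' hω' => ?_
    rw [Finset.mem_filter] at hω'
    rw [hω'.2]
  rw [hrhs, pSum]
  refine Finset.sum_nbij' (fun ω => ω ∘ Fin.succ) (fun ω' => Fin.cons q ω')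
    ?_ ?_ ?_ ?_ ?_
  · intro ω hω
    rw [Finset.mem_filter] at hω ⊢
    obtain ⟨-, h0, hmid, hlast⟩ := hω
    refine ⟨Finset.mem_univ _, fun t => ?_, ?_⟩
    · have := hmid t.succ
      rwa [← Fin.succ_castSucc] at this
    · show ω (Fin.last n).succ ∈ G
      rwa [Fin.succ_last]
  · intro ω' hω'
    rw [Finset.mem_filter] at hω' ⊢
    obtain ⟨-, hmid, hlast⟩ := hω'
    refine ⟨Finset.mem_univ _, Fin.cons_zero _ _, fun t => ?_, ?_⟩
    · induction t using Fin.cases with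
      | zero => simpa using ⟨hB, hG⟩
      | succ s =>
        show (Fin.cons q ω' : Fin (n + 2) → Q) (s.succ.castSucc) ∈ B ∧ (Fin.cons q ω' : Fin (n + 2) → Q) (s.succ.castSucc) ∉ G
        rw [← Fin.succ_castSucc, Fin.cons_succ]
        exact hmid s
    · show (Fin.cons q ω' : Fin (n + 2) → Q) (Fin.last (n + 1)) ∈ G
      rw [← Fin.succ_last, Fin.cons_succ]
      exact hlast
  · intro ω hω
    rw [Finset.mem_filter] at hω
    funext t
    show (Fin.cons q (ω ∘ Fin.succ) : Fin (n + 2) → Q) t = ω t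
    induction t using Fin.cases with
    | zero => rw [Fin.cons_zero, hω.2.1]
    | succ s => rw [Fin.cons_succ]; rfl
  · intro ω' _
    funext t
    show (Fin.cons q ω' : Fin (n + 2) → Q) t.succ = ω' t
    rw [Fin.cons_succ]
  · intro ω hω
    rw [Finset.mem_filter] at hω
    obtain ⟨-, h0, -, -⟩ := hω
    rw [Fin.prod_univ_succ]
    congr 1
    · simp [h0, ha]
    · refine Finset.prod_congr rfl fun t _ => ?_
      have h1 : ω t.succ.castSucc = (ω ∘ Fin.succ) t.castSucc := by
        rw [← Fin.succ_castSucc]; rfl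
      have h2 : (k + 1 - (t.succ : ℕ)) = k - (t : ℕ) := by
        rw [Fin.val_succ]; omega
      rw [h1, h2]
      rfl

lemma sum_Icc_shift (f : ℕ → ℝ) (k : ℕ) :
    f 1 + ∑ n ∈ Finset.Icc 1 k, f (n + 1) = ∑ n ∈ Finset.Icc 1 (k + 1), f n := by
  induction k with
  | zero => simp
  | succ k ih =>
    rw [Finset.sum_Icc_succ_top (by omega), Finset.sum_Icc_succ_top (by omega),
      ← add_assoc, ih]

end Aux

open Classical in
/-- The recursive constrained reachability value equals the sum, over all
goal-hitting safe paths of length `1 ≤ n ≤ k` starting at `q`, of the path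
probabilities (plus `1` if `q` is already a goal state). -/
theorem policy_value_eq_sum_over_paths
    {Q A : Type} [Fintype Q] [Fintype A] [Nonempty Q] [Nonempty A]
    (P : Q → A → Q → ℝ)
    (hP0 : ∀ q a q', 0 ≤ P q a q')
    (hP1 : ∀ q a, ∑ q', P q a q' = 1)
    (G B : Set Q) (hGB : G ⊆ B)
    (μ : ℕ → Q → A) (Pmu : ℕ → Q → ℝ)
    (hPG : ∀ k q, q ∈ G → Pmu k q = 1)
    (hPB : ∀ k q, q ∉ B → Pmu k q = 0)
    (hP0' : ∀ q, q ∈ B → q ∉ G → Pmu 0 q = 0)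
    (hPk : ∀ k q, q ∈ B → q ∉ G →
      Pmu (k + 1) q = ∑ q', P q (μ (k + 1) q) q' * Pmu k q') :
    ∀ k q, Pmu k q =
      (if q ∈ G then (1 : ℝ) else 0) +
        ∑ n ∈ Finset.Icc 1 k,
          ∑ ω ∈ Finset.univ.filter (fun ω : Fin (n + 1) → Q =>
              ω 0 = q ∧ (∀ t : Fin n, ω t.castSucc ∈ B ∧ ω t.castSucc ∉ G) ∧
                ω (Fin.last n) ∈ G),
            ∏ t : Fin n, P (ω t.castSucc) (μ (k - (t : ℕ)) (ω t.castSucc)) (ω t.succ) := by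
  have key : ∀ k q, Pmu k q =
      (if q ∈ G then (1 : ℝ) else 0) + ∑ n ∈ Finset.Icc 1 k, pSum P G B μ k n q := by
    intro k
    induction k with
    | zero =>
      intro q
      rw [show Finset.Icc 1 0 = (∅ : Finset ℕ) by simp, Finset.sum_empty, add_zero]
      by_cases hG : q ∈ G
      · rw [hPG 0 q hG, if_pos hG]
      · rw [if_neg hG]
        by_cases hB : q ∈ B
        · exact hP0' q hB hG
        · exact hPB 0 q hB
    | succ k ih =>
      intro q
      by_cases hG : q ∈ G
      · rw [hPG _ q hG, if_pos hG, Finset.sum_eq_zero, add_zero]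
        intro n hn
        exact pSum_goal P G B μ hG (Finset.mem_Icc.mp hn).1 _
      · rw [if_neg hG, zero_add]
        by_cases hB : q ∈ B
        · rw [hPk k q hB hG]
          calc ∑ q', P q (μ (k + 1) q) q' * Pmu k q'
              = ∑ q', (P q (μ (k + 1) q) q' * pSum P G B μ k 0 q'
                  + ∑ n ∈ Finset.Icc 1 k, P q (μ (k + 1) q) q' * pSum P G B μ k n q') := by
                refine Finset.sum_congr rfl fun q' _ => ?_
                rw [ih q', pSum_zero, mul_add, Finset.mul_sum]
            _ = pSum P G B μ (k + 1) 1 q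
                  + ∑ n ∈ Finset.Icc 1 k, pSum P G B μ (k + 1) (n + 1) q := by
                rw [Finset.sum_add_distrib, Finset.sum_comm,
                  ← pSum_succ P G B μ hB hG k 0]
                congr 1
                refine Finset.sum_congr rfl fun n _ => ?_
                rw [← pSum_succ P G B μ hB hG k n]
            _ = ∑ n ∈ Finset.Icc 1 (k + 1), pSum P G B μ (k + 1) n q :=
                sum_Icc_shift (fun n => pSum P G B μ (k + 1) n q) k
        · rw [hPB _ q hB]
          symm
          apply Finset.sum_eq_zero
          intro n hn
          exact pSum_unsafe P G B μ hB (Finset.mem_Icc.mp hn).1 _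
  intro k q
  rw [key k q]
  simp only [pSum]
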